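/- Let Ω and Δ be locally compact Hausdorff spaces, at least one of which has no isolated points, and let θ : C₀(Ω) → C₀(Δ) be a bijective ℂ-linear map such that both θ and θ⁻¹ are disjointness preserving. Then θ is bounded. -/

import Mathlib

/-!
For `y ∈ Δ` the functional `f ↦ θ f y` preserves disjointness, so it either has a support point
`x ∈ Ω` (it only sees the germ of `f` at `x`) or it kills every compactly supported function.
Since `θ⁻¹` preserves disjointness too, support points transfer back and forth: distinct `y` have
distinct support points, and every nonempty open subset of `Δ` contains a `y` of the first kind.
A gliding hump shows that for some `B` only finitely many `x` are support points of functionals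
`f ↦ θ f y` exceeding `B` somewhere on the unit ball. If `‖θ w y₀‖ > B` with `‖w‖ ≤ 1`, then
`{y | ‖θ w y‖ > B}` is an infinite open set (`Δ` has no isolated points), and removing the finitely
many `y` attached to those `x` leaves a nonempty open set without points of the first kind, which
is impossible.
So `θ` maps the unit ball into the ball of radius `B`. Finally, an isolated point `y` of `Δ`
would make `θ⁻¹` of a function supported at `y` supported at a single isolated point of `Ω`.
-/

open ZeroAtInfty Topology Filter Set Function

def PreservesDisjointness {A B : Type*} [Mul A] [Zero A] [Mul B] [Zero B] (φ : A → B) : Prop :=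
  ∀ a b, a * b = 0 → φ a * φ b = 0

namespace ZeroAtInftyContinuousMap

section Basic

variable {X E : Type*} [TopologicalSpace X] [SeminormedAddCommGroup E]

lemma norm_apply_le (f : C₀(X, E)) (x : X) : ‖f x‖ ≤ ‖f‖ := by
  rw [← norm_toBCF_eq_norm]
  exact f.toBCF.norm_coe_le_norm x

lemma norm_le_of_forall {f : C₀(X, E)} {C : ℝ} (hC : 0 ≤ C) (h : ∀ x, ‖f x‖ ≤ C) : ‖f‖ ≤ C := by
  rw [← norm_toBCF_eq_norm]
  exact (BoundedContinuousFunction.norm_le hC).2 h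

lemma norm_mul_le_of_forall_norm_le_one {e : C₀(X, ℂ)} (he : ∀ x, ‖e x‖ ≤ 1) (f : C₀(X, ℂ)) :
    ‖e * f‖ ≤ ‖f‖ :=
  norm_le_of_forall (norm_nonneg f) fun x ↦ by
    rw [mul_apply, norm_mul]
    exact (mul_le_of_le_one_left (norm_nonneg _) (he x)).trans (norm_apply_le f x)

lemma support_mul_subset_tsupport (e f : C₀(X, ℂ)) : support (e * f) ⊆ tsupport e := by
  rw [coe_mul]
  exact (support_mul_subset_left _ _).trans (subset_tsupport _)

lemma mul_eq_zero_of_disjoint {f g : C₀(X, ℂ)} (h : Disjoint (support f) (support g)) :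
    f * g = 0 :=
  DFunLike.coe_injective <| by
    rw [coe_mul, coe_zero, ← support_eq_empty_iff, support_mul', h.inter_eq]

noncomputable def evalCLM (x : X) : C₀(X, ℂ) →L[ℂ] ℂ :=
  LinearMap.mkContinuous
    { toFun f := f x
      map_add' _ _ := rfl
      map_smul' _ _ := rfl } 1 fun f ↦ by simpa using norm_apply_le f x

@[simp] lemma evalCLM_apply (x : X) (f : C₀(X, ℂ)) : evalCLM x f = f x := rfl

end Basic

theorem exists_eventually_one_of_isCompact_subset_isOpen {X : Type*} [TopologicalSpace X]
    [T2Space X] [LocallyCompactSpace X] {K U : Set X} (hK : IsCompact K) (hU : IsOpen U)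
    (hKU : K ⊆ U) :
    ∃ e : C₀(X, ℂ), (∀ᶠ z in 𝓝ˢ K, e z = 1) ∧ tsupport e ⊆ U ∧ HasCompactSupport e ∧
      ∀ z, ‖e z‖ ≤ 1 := by
  obtain ⟨L, hL, hKL, hLU⟩ := exists_compact_between hK hU hKU
  obtain ⟨χ, hχL, hχc, hχU, hχ01⟩ := exists_continuousMap_one_of_isCompact_subset_isOpen hL hU hLU
  have hcs : HasCompactSupport (fun z ↦ (χ z : ℂ)) :=
    HasCompactSupport.comp_left (g := ((↑) : ℝ → ℂ)) hχc Complex.ofReal_zero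
  refine ⟨⟨⟨fun z ↦ (χ z : ℂ), by fun_prop⟩, hcs.is_zero_at_infty⟩, ?_,
    (tsupport_comp_subset Complex.ofReal_zero _).trans hχU, hcs, fun z ↦ ?_⟩
  · filter_upwards [mem_nhdsSet_iff_forall.2 fun x hx ↦ mem_interior_iff_mem_nhds.1 (hKL hx)]
      with z hz
    simp [hχL hz]
  · simp only [coe_mk, Complex.norm_real, Real.norm_of_nonneg (hχ01 z).1]
    exact (hχ01 z).2

end ZeroAtInftyContinuousMap

open ZeroAtInftyContinuousMap

section GlidingHump

variable {X : Type*} [TopologicalSpace X]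

theorem bddAbove_half_pow_mul_of_pairwise_disjoint {T : ℕ → C₀(X, ℂ) →ₗ[ℂ] ℂ}
    (hT : ∀ f, BddAbove (range fun n ↦ ‖T n f‖)) {V : ℕ → Set X}
    (hV : Pairwise (Disjoint on V)) (hloc : ∀ n (f : C₀(X, ℂ)), EqOn f 0 (V n) → T n f = 0)
    {w : ℕ → C₀(X, ℂ)} (hwV : ∀ n, support (w n) ⊆ V n) (hw : ∀ n, ‖w n‖ ≤ 1) :
    BddAbove (range fun n ↦ (1 / 2) ^ n * ‖T n (w n)‖) := by
  have hsum : Summable fun n ↦ (1 / 2 : ℂ) ^ n • w n := by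
    refine .of_norm_bounded summable_geometric_two fun n ↦ ?_
    rw [norm_smul, norm_pow, norm_div, norm_one, Complex.norm_two]
    exact mul_le_of_le_one_right (by positivity) (hw n)
  set g := ∑' n, (1 / 2 : ℂ) ^ n • w n
  have hg : ∀ n, T n g = (1 / 2 : ℂ) ^ n * T n (w n) := fun n ↦ by
    rw [← smul_eq_mul, ← map_smul, ← sub_eq_zero, ← map_sub]
    refine hloc n _ fun z hz ↦ ?_
    have hgz : g z = ∑' m, (1 / 2 : ℂ) ^ m * w m z := by
      simpa only [evalCLM_apply, ZeroAtInftyContinuousMap.smul_apply, smul_eq_mul] using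
        (evalCLM z).map_tsum hsum
    rw [Pi.zero_apply, ZeroAtInftyContinuousMap.sub_apply, hgz, tsum_eq_single n fun m hm ↦ ?_,
      ZeroAtInftyContinuousMap.smul_apply, smul_eq_mul, sub_self]
    rw [notMem_support.1 fun h ↦ disjoint_left.1 (hV hm) (hwV m h) hz, mul_zero]
  obtain ⟨C, hC⟩ := hT g
  refine ⟨C, forall_mem_range.2 fun n ↦ ?_⟩
  simpa [hg, norm_mul, norm_pow] using hC (mem_range_self n)

end GlidingHump

section Extraction

variable {Z : Type*} [TopologicalSpace Z] [T2Space Z] [RegularSpace Z]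

theorem exists_seq_pairwise_disjoint_nhds {A : ℕ → Set Z} (hA : Antitone A)
    (hinf : ∀ n, (A n).Infinite) :
    ∃ x : ℕ → Z, ∃ V : ℕ → Set Z, (∀ n, x n ∈ A n ∧ V n ∈ 𝓝 (x n)) ∧
      Pairwise (Disjoint on V) := by
  have : (⨅ n, cofinite ⊓ 𝓟 (A n)).NeBot :=
    iInf_neBot_of_directed' (Antitone.directed_ge fun m n h ↦ inf_le_inf_left _
      (principal_mono.2 (hA h))) fun n ↦ (hinf n).cofinite_inf_principal_neBot
  set 𝒰 := Ultrafilter.of (⨅ n, cofinite ⊓ 𝓟 (A n))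
  have hA𝒰 : ∀ n, A n ∈ 𝒰 := fun n ↦
    Ultrafilter.of_le _ (mem_iInf_of_mem n (mem_inf_of_right (mem_principal_self _)))
  -- Away from the (at most one) limit of `𝒰`, every point has small closed neighbourhoods
  -- whose complements stay in `𝒰`, so the points still available always form a set in `𝒰`.
  set L := {z | (𝒰 : Filter Z) ≤ 𝓝 z}
  have hL : Lᶜ ∈ 𝒰 := Ultrafilter.of_le _ (mem_iInf_of_mem 0 (mem_inf_of_left
    (Set.Subsingleton.finite fun a ha b hb ↦ tendsto_nhds_unique ha hb).compl_mem_cofinite))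
  have hsep : ∀ z ∉ L, ∀ W ∈ 𝓝 z, ∃ C ∈ 𝓝 z, IsClosed C ∧ C ⊆ W ∧ Cᶜ ∈ 𝒰 := by
    intro z hz W hW
    obtain ⟨N, hN, hN𝒰⟩ := Filter.not_le.1 hz
    obtain ⟨C, hC, hCc, hCNW⟩ := exists_mem_nhds_isClosed_subset (inter_mem hN hW)
    exact ⟨C, hC, hCc, hCNW.trans inter_subset_right, Ultrafilter.compl_mem_iff_notMem.2
      fun h ↦ hN𝒰 (mem_of_superset h (hCNW.trans inter_subset_left))⟩
  obtain ⟨p, hp, hpp⟩ := exists_seq_of_forall_finset_exists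
    (fun q : ℕ × Z × Set Z ↦ q.2.1 ∈ A q.1 ∧ q.2.2 ∈ 𝓝 q.2.1 ∧ IsClosed q.2.2 ∧ q.2.2ᶜ ∈ 𝒰)
    (fun q q' ↦ q.1 < q'.1 ∧ Disjoint q.2.2 q'.2.2) fun s hs ↦ by
      have hW : IsOpen (⋂ q ∈ s, q.2.2ᶜ) :=
        isOpen_biInter_finset fun q hq ↦ (hs q hq).2.2.1.isOpen_compl
      obtain ⟨z, ⟨hzA, hzL⟩, hzW⟩ := Ultrafilter.nonempty_of_mem (inter_mem (inter_mem
        (hA𝒰 (s.sup Prod.fst + 1)) hL) ((biInter_finset_mem s).2 fun q hq ↦ (hs q hq).2.2.2))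
      obtain ⟨C, hC, hCc, hCW, hC𝒰⟩ := hsep z hzL _ (hW.mem_nhds hzW)
      refine ⟨(s.sup Prod.fst + 1, z, C), ⟨hzA, hC, hCc, hC𝒰⟩, fun q hq ↦
        ⟨Nat.lt_succ_of_le (Finset.le_sup hq), ?_⟩⟩
      exact disjoint_left.2 fun y hyq hyC ↦ mem_iInter₂.1 (hCW hyC) q hq hyq
  have hmono : StrictMono fun n ↦ (p n).1 :=
    strictMono_nat_of_lt_succ fun n ↦ (hpp n (n + 1) n.lt_succ_self).1
  exact ⟨fun n ↦ (p n).2.1, fun n ↦ (p n).2.2,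
    fun n ↦ ⟨hA (hmono.id_le n) (hp n).1, (hp n).2.1⟩,
    (pairwise_disjoint_on _).2 fun m n hmn ↦ (hpp m n hmn).2⟩

end Extraction

section SupportPoint

variable {X : Type*} [TopologicalSpace X]

def IsSupportPoint (T : C₀(X, ℂ) →ₗ[ℂ] ℂ) (x : X) : Prop :=
  ∀ f : C₀(X, ℂ), f =ᶠ[𝓝 x] 0 → T f = 0

variable {T : C₀(X, ℂ) →ₗ[ℂ] ℂ} {x : X}

lemma IsSupportPoint.map_mul (hx : IsSupportPoint T x) {e : C₀(X, ℂ)}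
    (he : ∀ᶠ z in 𝓝 x, e z = 1) (f : C₀(X, ℂ)) : T (e * f) = T f := by
  rw [← sub_eq_zero, ← map_sub]
  refine hx _ ?_
  filter_upwards [he] with z hz
  simp [hz]

variable [T2Space X] [LocallyCompactSpace X]

lemma IsSupportPoint.exists_support_subset (hx : IsSupportPoint T x) {U : Set X}
    (hU : U ∈ 𝓝 x) (f : C₀(X, ℂ)) :
    ∃ g : C₀(X, ℂ), support g ⊆ U ∧ ‖g‖ ≤ ‖f‖ ∧ T g = T f := by
  obtain ⟨e, he1, heU, -, he⟩ := exists_eventually_one_of_isCompact_subset_isOpen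
    isCompact_singleton isOpen_interior (singleton_subset_iff.2 (mem_interior_iff_mem_nhds.2 hU))
  rw [nhdsSet_singleton] at he1
  exact ⟨e * f, (support_mul_subset_tsupport e f).trans (heU.trans interior_subset),
    norm_mul_le_of_forall_norm_le_one he f, hx.map_mul he1 f⟩

lemma IsSupportPoint.eq (hT : T ≠ 0) (hx : IsSupportPoint T x) {y : X}
    (hy : IsSupportPoint T y) : x = y := by
  by_contra hxy
  obtain ⟨U, V, hU, hV, hxU, hyV, hUV⟩ := t2_separation hxy
  refine hT (LinearMap.ext fun f ↦ ?_)
  obtain ⟨g, hgU, -, hg⟩ := hx.exists_support_subset (hU.mem_nhds hxU) f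
  rw [← hg, LinearMap.zero_apply]
  exact hy g (eventuallyEq_of_mem (hV.mem_nhds hyV) fun z hz ↦
    notMem_support.1 fun h ↦ disjoint_left.1 hUV (hgU h) hz)

theorem exists_eventuallyEq_zero_nhdsSet {K : Set X} (hK : IsCompact K)
    (hdead : ∀ x ∈ K, ∃ U ∈ 𝓝 x, ∀ f : C₀(X, ℂ), support f ⊆ U → T f = 0) (f : C₀(X, ℂ)) :
    ∃ g : C₀(X, ℂ), T g = T f ∧ g =ᶠ[𝓝ˢ K] 0 ∧ support g ⊆ support f := by
  refine hK.induction_on (p := fun s ↦ ∀ f : C₀(X, ℂ),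
      ∃ g : C₀(X, ℂ), T g = T f ∧ g =ᶠ[𝓝ˢ s] 0 ∧ support g ⊆ support f)
    (fun f ↦ ⟨f, rfl, by simp [EventuallyEq], subset_rfl⟩) ?_ ?_ ?_ f
  · intro s t hst ht f
    obtain ⟨g, hg, hgt, hgf⟩ := ht f
    exact ⟨g, hg, hgt.filter_mono (nhdsSet_mono hst), hgf⟩
  · intro s t hs ht f
    obtain ⟨g, hg, hgs, hgf⟩ := hs f
    obtain ⟨g', hg', hg't, hg'g⟩ := ht g
    refine ⟨g', hg'.trans hg, ?_, hg'g.trans hgf⟩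
    rw [EventuallyEq, nhdsSet_union, eventually_sup]
    exact ⟨hgs.mono fun z hz ↦ notMem_support.1 fun h ↦ hg'g h hz, hg't⟩
  · intro x hx
    obtain ⟨U, hU, hUT⟩ := hdead x hx
    obtain ⟨e, he1, heU, -⟩ := exists_eventually_one_of_isCompact_subset_isOpen
      isCompact_singleton isOpen_interior (singleton_subset_iff.2 (mem_interior_iff_mem_nhds.2 hU))
    rw [nhdsSet_singleton, ← eventually_eventually_nhds] at he1
    refine ⟨_, mem_nhdsWithin_of_mem_nhds he1, fun f ↦ ⟨f - e * f, ?_, ?_, ?_⟩⟩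
    · rw [map_sub, hUT (e * f) ((support_mul_subset_tsupport e f).trans
        (heU.trans interior_subset)), sub_zero]
    · exact eventually_nhdsSet_iff_forall.2 fun y hy ↦ hy.mono fun z hz ↦ by simp [hz]
    · exact fun z hz hfz ↦ hz (by simp [hfz])

theorem PreservesDisjointness.exists_isSupportPoint_or (hT : PreservesDisjointness T) :
    (∃ x, IsSupportPoint T x) ∨ ∀ f : C₀(X, ℂ), HasCompactSupport f → T f = 0 := by
  by_cases hdead : ∀ x : X, ∃ U ∈ 𝓝 x, ∀ f : C₀(X, ℂ), support f ⊆ U → T f = 0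
  · refine .inr fun f hf ↦ ?_
    obtain ⟨g, hg, hgK, hgf⟩ := exists_eventuallyEq_zero_nhdsSet hf (fun x _ ↦ hdead x) f
    have : g = 0 := ext fun z ↦
      by_contra fun h ↦ h (hgK.self_of_nhdsSet (subset_tsupport _ (hgf h)))
    rw [← hg, this, map_zero]
  push Not at hdead
  obtain ⟨x₀, hx₀⟩ := hdead
  have hdead' : ∀ y ≠ x₀, ∃ U ∈ 𝓝 y, ∀ g : C₀(X, ℂ), support g ⊆ U → T g = 0 := by
    intro y hy
    by_contra! h
    obtain ⟨U, V, hU, hV, hyU, hxV, hUV⟩ := t2_separation hy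
    obtain ⟨g, hgU, hg⟩ := h U (hU.mem_nhds hyU)
    obtain ⟨g', hg'V, hg'⟩ := hx₀ V (hV.mem_nhds hxV)
    exact mul_ne_zero hg hg' (hT g g' (mul_eq_zero_of_disjoint (hUV.mono hgU hg'V)))
  refine .inl ⟨x₀, fun f hf ↦ ?_⟩
  obtain ⟨N, hN, hNx⟩ := exists_compact_mem_nhds x₀
  obtain ⟨O, hOf, hO, hxO⟩ := mem_nhds_iff.1 hf
  obtain ⟨g, hg, hgK, hgf⟩ := exists_eventuallyEq_zero_nhdsSet (hN.diff hO)
    (fun y hy ↦ hdead' y (ne_of_mem_of_not_mem hxO hy.2).symm) f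
  obtain ⟨h, hhN, hh⟩ := hx₀ N hNx
  have hgh : Disjoint (support g) (support h) := by
    refine disjoint_left.2 fun z hgz hhz ↦ hgz ?_
    by_cases hzO : z ∈ O
    · exact notMem_support.1 fun h ↦ hgf h (hOf hzO)
    · exact hgK.self_of_nhdsSet ⟨hhN hhz, hzO⟩
  rw [← hg]
  exact (mul_eq_zero.1 (hT g h (mul_eq_zero_of_disjoint hgh))).resolve_right hh

end SupportPoint

section Transfer

variable {X Y : Type*} [TopologicalSpace X] [TopologicalSpace Y]

noncomputable def evalComp (θ : C₀(X, ℂ) ≃ₗ[ℂ] C₀(Y, ℂ)) (y : Y) : C₀(X, ℂ) →ₗ[ℂ] ℂ :=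
  (evalCLM y).toLinearMap ∘ₗ θ.toLinearMap

@[simp] lemma evalComp_apply (θ : C₀(X, ℂ) ≃ₗ[ℂ] C₀(Y, ℂ)) (y : Y) (f : C₀(X, ℂ)) :
    evalComp θ y f = θ f y := rfl

variable {θ : C₀(X, ℂ) ≃ₗ[ℂ] C₀(Y, ℂ)}

lemma PreservesDisjointness.evalComp (hθ : PreservesDisjointness θ) (y : Y) :
    PreservesDisjointness (evalComp θ y) := fun f g hfg ↦ by
  simpa using congr($(hθ f g hfg) y)

variable [T2Space Y] [LocallyCompactSpace Y]

lemma evalComp_ne_zero (y : Y) : evalComp θ y ≠ 0 := fun h ↦ by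
  obtain ⟨e, he1, -⟩ := exists_eventually_one_of_isCompact_subset_isOpen isCompact_singleton
    isOpen_univ (subset_univ {y})
  simpa [he1.self_of_nhdsSet _ rfl] using LinearMap.congr_fun h (θ.symm e)

lemma IsSupportPoint.symm (hinv : PreservesDisjointness θ.symm) {x : X} {y : Y}
    (hx : IsSupportPoint (evalComp θ y) x) : IsSupportPoint (evalComp θ.symm x) y := by
  intro g hg
  by_contra hgx
  obtain ⟨e, he1, heg, -⟩ := exists_eventually_one_of_isCompact_subset_isOpen
    isCompact_singleton isOpen_interior (singleton_subset_iff.2 (mem_interior_iff_mem_nhds.2 hg))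
  have hdisj : Disjoint (support e) (support g) := disjoint_left.2 fun z hez ↦ by
    have : z ∈ {x | g x = (0 : Y → ℂ) x} := interior_subset (heg (subset_tsupport _ hez))
    simpa using this
  have hprod := hinv e g (mul_eq_zero_of_disjoint hdisj)
  have he0 : θ.symm e =ᶠ[𝓝 x] 0 := by
    filter_upwards [(θ.symm g).continuous.continuousAt.eventually_ne hgx] with z hz
    exact (mul_eq_zero.1 (by simpa using congr($hprod z))).resolve_right hz
  simpa [he1.self_of_nhdsSet _ rfl] using hx _ he0

variable [T2Space X] [LocallyCompactSpace X]

lemma subsingleton_setOf_isSupportPoint (hinv : PreservesDisjointness θ.symm) (x : X) :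
    {y | IsSupportPoint (evalComp θ y) x}.Subsingleton := fun _ hy _ hy' ↦
  (hy.symm hinv).eq (evalComp_ne_zero x) (hy'.symm hinv)

lemma exists_mem_tsupport_isSupportPoint (hfwd : PreservesDisjointness θ)
    (hinv : PreservesDisjointness θ.symm) {e : C₀(Y, ℂ)} (he : HasCompactSupport e) {x : X}
    (hx : θ.symm e x ≠ 0) : ∃ y ∈ tsupport e, IsSupportPoint (evalComp θ y) x := by
  rcases (hinv.evalComp x).exists_isSupportPoint_or with ⟨y, hy⟩ | hc
  · refine ⟨y, of_not_not fun hye ↦ hx (hy e (notMem_tsupport_iff_eventuallyEq.1 hye)), ?_⟩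
    simpa using hy.symm (θ := θ.symm) (by simpa using hfwd)
  · exact absurd (hc e he) hx

lemma exists_isSupportPoint_of_isOpen (hfwd : PreservesDisjointness θ)
    (hinv : PreservesDisjointness θ.symm) {O : Set Y} (hO : IsOpen O) (hne : O.Nonempty) :
    ∃ y ∈ O, ∃ x, IsSupportPoint (evalComp θ y) x := by
  obtain ⟨y₀, hy₀⟩ := hne
  obtain ⟨e, he1, heO, hec, -⟩ := exists_eventually_one_of_isCompact_subset_isOpen
    isCompact_singleton hO (singleton_subset_iff.2 hy₀)
  obtain ⟨x, hx⟩ : ∃ x, θ.symm e x ≠ 0 := by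
    by_contra! h
    have he0 : e = 0 := by simpa using (ext h : θ.symm e = 0)
    simpa [he0] using he1.self_of_nhdsSet y₀ rfl
  obtain ⟨y, hy, hyx⟩ := exists_mem_tsupport_isSupportPoint hfwd hinv hec hx
  exact ⟨y, heO hy, x, hyx⟩

theorem neBot_nhdsNE_of_preservesDisjointness (hfwd : PreservesDisjointness θ)
    (hinv : PreservesDisjointness θ.symm) (hX : ∀ x : X, (𝓝[≠] x).NeBot) (y : Y) :
    (𝓝[≠] y).NeBot := by
  rw [neBot_iff, Ne, ← isOpen_singleton_iff_punctured_nhds]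
  intro hy
  obtain ⟨e, he1, hey, hec, -⟩ :=
    exists_eventually_one_of_isCompact_subset_isOpen isCompact_singleton hy subset_rfl
  obtain ⟨x₀, hx₀⟩ : ∃ x, θ.symm e x ≠ 0 := by
    by_contra! h
    have he0 : e = 0 := by simpa using (ext h : θ.symm e = 0)
    simpa [he0] using he1.self_of_nhdsSet y rfl
  have hsupp : ∀ x, θ.symm e x ≠ 0 → IsSupportPoint (evalComp θ y) x := fun x hx ↦ by
    obtain ⟨σ, hσ, hσx⟩ := exists_mem_tsupport_isSupportPoint hfwd hinv hec hx
    rwa [hey hσ] at hσx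
  have hx₀' : {x | θ.symm e x ≠ 0} = {x₀} := eq_singleton_iff_unique_mem.2
    ⟨hx₀, fun x hx ↦ (hsupp x hx).eq (evalComp_ne_zero y) (hsupp x₀ hx₀)⟩
  refine (hX x₀).ne ((isOpen_singleton_iff_punctured_nhds x₀).1 ?_)
  exact hx₀' ▸ isOpen_ne_fun (θ.symm e).continuous continuous_const

end Transfer

section UniformBound

variable {X Y : Type*} [TopologicalSpace X] [T2Space X] [LocallyCompactSpace X]

def largeSupportPoints (T : Y → C₀(X, ℂ) →ₗ[ℂ] ℂ) (B : ℝ) : Set X :=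
  {x | ∃ y, IsSupportPoint (T y) x ∧ ∃ w : C₀(X, ℂ), ‖w‖ ≤ 1 ∧ B < ‖T y w‖}

theorem exists_finite_largeSupportPoints {T : Y → C₀(X, ℂ) →ₗ[ℂ] ℂ}
    (hT : ∀ f, BddAbove (range fun y ↦ ‖T y f‖)) : ∃ B, (largeSupportPoints T B).Finite := by
  by_contra! h
  obtain ⟨x, V, hxV, hV⟩ := exists_seq_pairwise_disjoint_nhds
    (A := fun n ↦ largeSupportPoints T (4 ^ n))
    (fun m n hmn x ⟨y, hy, w, hw, hB⟩ ↦
      ⟨y, hy, w, hw, (pow_le_pow_right₀ (by norm_num) hmn).trans_lt hB⟩) fun n ↦ h _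
  choose y hy w hw hwB using fun n ↦ (hxV n).1
  choose v hvV hv hvw using fun n ↦ (hy n).exists_support_subset (hxV n).2 (w n)
  obtain ⟨M, hM⟩ := bddAbove_half_pow_mul_of_pairwise_disjoint (T := fun n ↦ T (y n))
    (fun f ↦ (hT f).mono (range_comp_subset_range y fun y ↦ ‖T y f‖)) hV
    (fun n f hf ↦ hy n f (eventuallyEq_of_mem (hxV n).2 hf)) hvV fun n ↦ (hv n).trans (hw n)
  obtain ⟨n, hn⟩ := pow_unbounded_of_one_lt M one_lt_two
  have hMn := hM (mem_range_self n)
  simp only [hvw] at hMn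
  have : (2 : ℝ) ^ n < (1 / 2) ^ n * ‖T (y n) (w n)‖ :=
    calc (2 : ℝ) ^ n = (1 / 2) ^ n * 4 ^ n := by rw [← mul_pow]; norm_num
      _ < _ := mul_lt_mul_of_pos_left (hwB n) (by positivity)
  linarith

variable [TopologicalSpace Y] [T2Space Y] [LocallyCompactSpace Y] {θ : C₀(X, ℂ) ≃ₗ[ℂ] C₀(Y, ℂ)}

theorem infinite_largeSupportPoints (hfwd : PreservesDisjointness θ)
    (hinv : PreservesDisjointness θ.symm) (hY : ∀ y : Y, (𝓝[≠] y).NeBot) {w : C₀(X, ℂ)}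
    (hw : ‖w‖ ≤ 1) {B : ℝ} {y₀ : Y} (hB : B < ‖θ w y₀‖) :
    (largeSupportPoints (evalComp θ) B).Infinite := by
  intro hfin
  set S := ⋃ x ∈ largeSupportPoints (evalComp θ) B, {y | IsSupportPoint (evalComp θ y) x}
  have hS : S.Finite := hfin.biUnion fun x _ ↦ (subsingleton_setOf_isSupportPoint hinv x).finite
  have hO : IsOpen {y | B < ‖θ w y‖} := isOpen_lt continuous_const (θ w).continuous.norm
  obtain ⟨y, ⟨hyO, hyS⟩, x, hx⟩ := exists_isSupportPoint_of_isOpen hfwd hinv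
    (hO.sdiff hS.isClosed) ((infinite_of_mem_nhds y₀ (hO.mem_nhds hB)).sdiff hS).nonempty
  exact hyS (mem_biUnion ⟨y, hx, w, hw, hyO⟩ hx)

end UniformBound

theorem stmt_11
    {Ω Δ : Type*} [TopologicalSpace Ω] [LocallyCompactSpace Ω] [T2Space Ω]
    [TopologicalSpace Δ] [LocallyCompactSpace Δ] [T2Space Δ]
    (hni : (∀ ω : Ω, (𝓝[≠] ω).NeBot) ∨ (∀ ν : Δ, (𝓝[≠] ν).NeBot))
    (θ : C₀(Ω, ℂ) ≃ₗ[ℂ] C₀(Δ, ℂ))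
    (hfwd : ∀ f g : C₀(Ω, ℂ), f * g = 0 → θ f * θ g = 0)
    (hinv : ∀ f g : C₀(Δ, ℂ), f * g = 0 → θ.symm f * θ.symm g = 0) :
    ∃ C : ℝ, ∀ f : C₀(Ω, ℂ), ‖θ f‖ ≤ C * ‖f‖ := by
  have hΔ : ∀ ν : Δ, (𝓝[≠] ν).NeBot :=
    hni.elim (neBot_nhdsNE_of_preservesDisjointness hfwd hinv) id
  obtain ⟨B, hB⟩ := exists_finite_largeSupportPoints (T := evalComp θ) fun f ↦
    ⟨‖θ f‖, forall_mem_range.2 fun ν ↦ norm_apply_le (θ f) ν⟩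
  refine LinearMap.bound_of_ball_bound one_pos (max B 0) θ.toLinearMap fun f hf ↦
    norm_le_of_forall (le_max_right _ _) fun ν ↦ (le_max_left _ _).trans' ?_
  exact not_lt.1 fun h ↦ infinite_largeSupportPoints hfwd hinv hΔ (mem_ball_zero_iff.1 hf).le h hB
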